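/- arXiv:1705.08789 — 3 statements merged into one kernel-verified Lean document; each statement's English description precedes it below -/
import Mathlib

section
/- Let a, L be real numbers, b > a, and f : [a,b] → ℝ. Suppose that for all s in (a,b], the left upper derivative limsup_{t→s⁻} (f(t)-f(s))/(t-s) is at most L, and that for all t in [a,b), limsup_{h→0⁺} f(t+h) ≤ f(t). Then f(b) - f(a) ≤ L(b-a). -/
open Filter Set

/-- Lemma A.1 (Lahiri, "Equality of the usual definitions of Brakke flow"):
if the left upper derivative of `f` is at most `L` on `(a,b]` and `f` is
upper semicontinuous from the right on `[a,b)`, then `f b - f a ≤ L (b - a)`. -/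
theorem left_upper_derivative_growth_bound
    (a b L : ℝ) (hab : a < b) (f : ℝ → ℝ)
    (hleft : ∀ s ∈ Set.Ioc a b,
      Filter.limsup (fun t => ((f t - f s) / (t - s) : EReal)) (nhdsWithin s (Set.Ico a s))
        ≤ (L : EReal))
    (hright : ∀ t ∈ Set.Ico a b,
      Filter.limsup (fun h => (f (t + h) : EReal)) (nhdsWithin 0 (Set.Ioi (0 : ℝ)))
        ≤ (f t : EReal)) :
    f b - f a ≤ L * (b - a) := by
  have key : ∀ ε > (0:ℝ), f b ≤ f a + (L + ε) * (b - a) + ε := by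
    intro ε hε
    set S : Set ℝ := {t | t ∈ Set.Icc a b ∧ f t < f a + (L + ε) * (t - a) + ε} with hSdef
    have haS : a ∈ S := ⟨⟨le_refl a, hab.le⟩, by nlinarith⟩
    have hbdd : BddAbove S := ⟨b, fun t ht => ht.1.2⟩
    have hSne : S.Nonempty := ⟨a, haS⟩
    set c := sSup S with hc
    have hac : a ≤ c := le_csSup hbdd haS
    have hcb : c ≤ b := csSup_le hSne (fun t ht => ht.1.2)
    have hcS : c ∈ S := by
      by_cases hmem : c ∈ S
      · exact hmem
      · -- c ∉ S; then a < c and points of S approach c from below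
        have hacne : a ≠ c := fun h => hmem (h ▸ haS)
        have hac' : a < c := lt_of_le_of_ne hac hacne
        have hSsub : S ⊆ Set.Ico a c := by
          intro t ht
          refine ⟨ht.1.1, lt_of_le_of_ne (le_csSup hbdd ht) ?_⟩
          intro h; exact hmem (h ▸ ht)
        have hclos : c ∈ closure S := by
          rw [Metric.mem_closure_iff]
          intro δ hδ
          obtain ⟨t, htS, htlt⟩ := exists_lt_of_lt_csSup hSne (show c - δ < c by linarith)
          refine ⟨t, htS, ?_⟩
          have : t ≤ c := le_csSup hbdd htS
          rw [Real.dist_eq]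
          rw [abs_lt]; constructor <;> linarith
        have hne : (nhdsWithin c S).NeBot := mem_closure_iff_nhdsWithin_neBot.mp hclos
        have hlt : (L : EReal) < ((L + ε : ℝ) : EReal) := by
          exact_mod_cast (by linarith : L < L + ε)
        have hev : ∀ᶠ t in nhdsWithin c (Set.Ico a c),
            ((f t - f c) / (t - c) : EReal) < ((L + ε : ℝ) : EReal) :=
          Filter.eventually_lt_of_limsup_lt ((hleft c ⟨hac', hcb⟩).trans_lt hlt)
        have hev' : ∀ᶠ t in nhdsWithin c S,
            ((f t - f c) / (t - c) : EReal) < ((L + ε : ℝ) : EReal) :=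
          (nhdsWithin_mono c hSsub) hev
        have hevS : ∀ᶠ t in nhdsWithin c S, t ∈ S := self_mem_nhdsWithin
        obtain ⟨t, hq, htS⟩ := (hev'.and hevS).exists
        have htc : t < c := (hSsub htS).2
        have hqr : (f t - f c) / (t - c) < L + ε := by
          rw [← EReal.coe_sub, ← EReal.coe_sub, ← EReal.coe_div] at hq
          exact_mod_cast hq
        have htc' : t - c < 0 := by linarith
        have hmul : (L + ε) * (t - c) < f t - f c := by
          rwa [div_lt_iff_of_neg htc'] at hqr
        have hftS : f t < f a + (L + ε) * (t - a) + ε := htS.2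
        refine ⟨⟨hac, hcb⟩, ?_⟩
        nlinarith [hmul, hftS]
    have hceq : c = b := by
      by_contra hne
      have hcb' : c < b := lt_of_le_of_ne hcb hne
      set R : ℝ := f a + (L + ε) * (c - a) + ε with hR
      have hfc : f c < R := hcS.2
      set δ : ℝ := (R - f c) / 2 with hδdef
      have hδ : 0 < δ := by simp only [hδdef]; linarith
      have hlt : ((f c : ℝ) : EReal) < ((f c + δ : ℝ) : EReal) := by
        exact_mod_cast (by linarith : f c < f c + δ)
      have hev : ∀ᶠ h in nhdsWithin 0 (Set.Ioi (0:ℝ)),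
          ((f (c + h) : ℝ) : EReal) < ((f c + δ : ℝ) : EReal) :=
        Filter.eventually_lt_of_limsup_lt ((hright c ⟨hac, hcb'⟩).trans_lt hlt)
      set m : ℝ := min (b - c) (δ / (|L + ε| + 1)) with hm
      have hmpos : 0 < m := by
        apply lt_min (by linarith)
        positivity
      have hev2 : ∀ᶠ h in nhdsWithin 0 (Set.Ioi (0:ℝ)), h ∈ Set.Ioo (0:ℝ) m :=
        Ioo_mem_nhdsGT_of_mem ⟨le_refl 0, hmpos⟩
      obtain ⟨h, hq, hh0, hhm⟩ := (hev.and hev2).exists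
      have hqr : f (c + h) < f c + δ := by exact_mod_cast hq
      have hhb : h < b - c := lt_of_lt_of_le hhm (min_le_left _ _)
      have hhδ : |L + ε| * h < δ := by
        have h2 : h < δ / (|L + ε| + 1) := lt_of_lt_of_le hhm (min_le_right _ _)
        have h3 : h * (|L + ε| + 1) < δ := by
          rwa [lt_div_iff₀ (by positivity)] at h2
        nlinarith [abs_nonneg (L + ε)]
      have hLh : -δ < (L + ε) * h := by
        have := neg_abs_le (L + ε)
        nlinarith [abs_nonneg (L + ε)]
      have hchS : c + h ∈ S := by
        refine ⟨⟨by linarith, by linarith⟩, ?_⟩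
        have : f a + (L + ε) * (c + h - a) + ε = R + (L + ε) * h := by
          simp only [hR]; ring
        rw [this]
        have : f c + δ = R - δ := by simp only [hδdef]; ring
        linarith
      have : c + h ≤ c := le_csSup hbdd hchS
      linarith
    have : f b < f a + (L + ε) * (b - a) + ε := hceq ▸ hcS.2
    linarith
  -- let ε → 0
  have hpos : 0 < b - a + 1 := by linarith
  refine le_of_forall_pos_le_add ?_
  intro ε' hε'
  have hε : 0 < ε' / (b - a + 1) := by positivity
  have := key _ hε
  have hcalc : (ε' / (b - a + 1)) * (b - a) + ε' / (b - a + 1) = ε' := by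
    field_simp
  nlinarith [this, hcalc]
end

section
/- Let a, L be real numbers, b > a, and f : [a,b] → ℝ. Suppose that for all s in [a,b], the upper derivative limsup_{t→s} (f(t)-f(s))/(t-s) is at most L. Then the function s ↦ limsup_{t→s}(f(t)-f(s))/(t-s) is integrable on [a,b], and f(b) - f(a) ≤ ∫_a^b limsup_{t→s}(f(t)-f(s))/(t-s) ds. -/
open Filter Set

/-- The canonical map `EReal → ℝ≥0∞`, sending `⊤` to `⊤` and everything
nonpositive to `0`. -/
noncomputable def erealToENNReal (x : EReal) : ENNReal :=
  if x = ⊤ then ⊤ else ENNReal.ofReal x.toReal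

/-- The upper derivative of `f` at `s` relative to `[a,b]`, as an extended real. -/
noncomputable def upperDeriv (a b : ℝ) (f : ℝ → ℝ) (s : ℝ) : EReal :=
  Filter.limsup (fun t => ((f t - f s) / (t - s) : EReal))
    (nhdsWithin s (Set.Icc a b \ {s}))

/-!
For every `c > L` the slopes of `f` at a point of `[a,b]` are eventually `< c`, so by a supremum
argument `t ↦ c t - f t` is monotone on `[a,b]`; letting `c → L`, so is `g t = L t - f t`.

Monotonicity of `g` lets the slope of `f` between `s` and any `t` be approximated from below by
slopes between `s` and rationals `q` lying between `s` and `t`. Hence the upper derivative is a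
countable `⨅ ⨆` of measurable functions, once `f` is replaced on `ℝ \ [a,b]` using a monotone
extension of `g`.

Finally `g` is differentiable almost everywhere, `L - upperDeriv f = g'` at such interior points,
and the change of variables formula bounds `∫_a^b g'` by the length `g b - g a` of `[g a, g b]`.
-/

open MeasureTheory Topology

variable {a b L : ℝ} {f g : ℝ → ℝ} {s : ℝ}

theorem upperDeriv_eq_limsup_slope :
    upperDeriv a b f s = limsup (fun t => (slope f s t : EReal)) (𝓝[Icc a b \ {s}] s) := by
  simp only [upperDeriv, slope_def_field, EReal.coe_div, EReal.coe_sub]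

theorem upperDeriv_of_notMem (hs : s ∉ Icc a b) : upperDeriv a b f s = ⊥ := by
  have : s ∉ closure (Icc a b \ {s}) := fun h =>
    hs (isClosed_Icc.closure_subset_iff.2 sdiff_subset h)
  rw [upperDeriv, notMem_closure_iff_nhdsWithin_eq_bot.1 this, limsup_bot]

theorem upperDeriv_congr {f' : ℝ → ℝ} (h : EqOn f f' (Icc a b)) :
    upperDeriv a b f = upperDeriv a b f' := by
  funext s
  by_cases hs : s ∈ Icc a b
  · refine limsup_congr ?_
    filter_upwards [self_mem_nhdsWithin] with t ht
    rw [h ht.1, h hs]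
  · rw [upperDeriv_of_notMem hs, upperDeriv_of_notMem hs]

theorem eventually_slope_lt_of_upperDeriv_lt {c : ℝ} (h : upperDeriv a b f s < c) :
    ∀ᶠ t in 𝓝[Icc a b \ {s}] s, slope f s t < c := by
  rw [upperDeriv_eq_limsup_slope] at h
  exact (eventually_lt_of_limsup_lt h).mono fun t ht => EReal.coe_lt_coe_iff.1 ht

theorem slope_mul_sub (c : ℝ) {t : ℝ} (h : t ≠ s) :
    slope (fun x => c * x - f x) s t = c - slope f s t := by
  rw [slope_def_field, slope_def_field]
  field_simp [sub_ne_zero.2 h]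
  ring

theorem monotoneOn_of_forall_eventually_slope_nonneg
    (h : ∀ s ∈ Icc a b, ∀ᶠ t in 𝓝[Icc a b \ {s}] s, 0 ≤ slope g s t) :
    MonotoneOn g (Icc a b) := by
  intro x hx y hy hxy
  set S := {t ∈ Icc x y | g x ≤ g t}
  have hxS : x ∈ S := ⟨⟨le_rfl, hxy⟩, le_rfl⟩
  have hS : BddAbove S := ⟨y, fun t ht => ht.1.2⟩
  set m := sSup S
  have hxm : x ≤ m := le_csSup hS hxS
  have hmy : m ≤ y := csSup_le ⟨x, hxS⟩ fun t ht => ht.1.2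
  have hIcc : Icc x y ⊆ Icc a b := Icc_subset_Icc hx.1 hy.2
  obtain ⟨δ, hδ, hball⟩ :=
    Metric.nhdsWithin_basis_ball.eventually_iff.1 (h m (hIcc ⟨hxm, hmy⟩))
  have hloc : ∀ t ∈ Icc x y, |t - m| < δ → t ≠ m → 0 ≤ slope g m t := fun t ht htm htm' =>
    hball ⟨by rwa [Metric.mem_ball, Real.dist_eq], hIcc ht, htm'⟩
  have hmS : m ∈ S := by
    refine ⟨⟨hxm, hmy⟩, ?_⟩
    obtain ⟨t, htS, hmt⟩ := exists_lt_of_lt_csSup ⟨x, hxS⟩ (sub_lt_self m hδ)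
    rcases (le_csSup hS htS).lt_or_eq with htm | rfl
    · have := hloc t htS.1 (by rw [abs_sub_lt_iff]; constructor <;> linarith) htm.ne
      rw [slope_comm, slope_nonneg_iff_of_le htm.le] at this
      exact htS.2.trans this
    · exact htS.2
  rcases hmy.eq_or_lt with hmy | hmy
  · exact hmy ▸ hmS.2
  have hmt : m < min (m + δ / 2) y := lt_min (by linarith) hmy
  have htS : min (m + δ / 2) y ∈ S := by
    refine ⟨⟨hxm.trans hmt.le, min_le_right _ _⟩, hmS.2.trans ?_⟩
    have := hloc _ ⟨hxm.trans hmt.le, min_le_right _ _⟩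
      (by rw [abs_of_pos (sub_pos.2 hmt)]; linarith [min_le_left (m + δ / 2) y]) hmt.ne'
    exact (slope_nonneg_iff_of_le hmt.le).1 this
  exact absurd (le_csSup hS htS) (not_le.2 hmt)

theorem monotoneOn_mul_sub_of_upperDeriv_le (hL : ∀ s ∈ Icc a b, upperDeriv a b f s ≤ L) :
    MonotoneOn (fun t => L * t - f t) (Icc a b) := by
  have hc : ∀ c > L, MonotoneOn (fun t => c * t - f t) (Icc a b) := fun c hc =>
    monotoneOn_of_forall_eventually_slope_nonneg fun s hs => by
      filter_upwards [self_mem_nhdsWithin, eventually_slope_lt_of_upperDeriv_lt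
        ((hL s hs).trans_lt (EReal.coe_lt_coe_iff.2 hc))] with t ht hlt
      rw [slope_mul_sub c ht.2]
      exact sub_nonneg.2 hlt.le
  intro x hx y hy hxy
  have hlim : Tendsto (fun c => (c * y - f y) - (c * x - f x)) (𝓝[>] L)
      (𝓝 ((L * y - f y) - (L * x - f x))) :=
    (Continuous.tendsto (by fun_prop) L).mono_left nhdsWithin_le_nhds
  exact sub_nonneg.1 (ge_of_tendsto hlim (eventually_nhdsWithin_of_forall fun c hcL =>
    sub_nonneg.2 (hc c hcL hx hy hxy)))

theorem MonotoneOn.slope_le_of_mem_uIoo (hg : MonotoneOn g (Icc a b)) {t q : ℝ}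
    (hs : s ∈ Icc a b) (ht : t ∈ Icc a b) (hq : q ∈ uIoo s t) :
    slope g s q ≤ (g t - g s) / (q - s) := by
  have hq' : q ∈ Icc a b := uIcc_subset_Icc hs ht (uIoo_subset_uIcc_self hq)
  rw [slope_def_field]
  rcases le_total s t with hst | hts
  · rw [uIoo_of_le hst] at hq
    exact div_le_div_of_nonneg_right (by linarith [hg hq' ht hq.2.le]) (sub_nonneg.2 hq.1.le)
  · rw [uIoo_of_ge hts] at hq
    exact div_le_div_of_nonpos_of_le (sub_nonpos.2 hq.2.le) (by linarith [hg ht hq' hq.1.le])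

theorem exists_rat_mem_lt_slope (hg : MonotoneOn (fun x => L * x - f x) (Icc a b))
    {t c : ℝ} (hs : s ∈ Icc a b) (ht : t ∈ Icc a b) (hts : t ≠ s) (hc : c < slope f s t)
    {U : Set ℝ} (hU : U ∈ 𝓝 t) :
    ∃ q : ℚ, (q : ℝ) ∈ U ∩ (Icc a b \ {s}) ∧ c < slope f s q := by
  -- `φ q ≤ slope f s q` for `q` between `s` and `t` (`MonotoneOn.slope_le_of_mem_uIoo`)
  set φ : ℝ → ℝ := fun q => L - ((L * t - f t) - (L * s - f s)) / (q - s)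
  have hφt : φ t = slope f s t := by
    simp only [φ, slope_def_field]
    field_simp [sub_ne_zero.2 hts]
    ring
  have hφ : ∀ᶠ q in 𝓝 t, c < φ q := by
    refine ContinuousAt.eventually_lt continuousAt_const ?_ (hφt ▸ hc)
    exact continuousAt_const.sub (continuousAt_const.div (continuousAt_id.sub continuousAt_const)
      (sub_ne_zero.2 hts))
  have hcl : t ∈ closure (uIoo s t) := by
    rw [uIoo, closure_Ioo (min_lt_max.2 hts.symm).ne]
    exact ⟨min_le_right _ _, le_max_right _ _⟩
  obtain ⟨q, hqV, hq⟩ := Rat.denseRange_cast.exists_mem_open (isOpen_interior.inter isOpen_Ioo)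
    (mem_closure_iff_nhds.1 hcl _ (interior_mem_nhds.2 (inter_mem hU hφ)))
  obtain ⟨hqU, hqφ⟩ := interior_subset hqV
  have hqs : (q : ℝ) ≠ s := fun h => left_notMem_uIoo (h ▸ hq)
  refine ⟨q, ⟨hqU, uIcc_subset_Icc hs ht (uIoo_subset_uIcc_self hq), hqs⟩, hqφ.trans_le ?_⟩
  have hbound := hg.slope_le_of_mem_uIoo hs ht hq
  rw [slope_mul_sub L hqs] at hbound
  simp only [φ]
  linarith

theorem upperDeriv_eq_iInf_iSup_rat (hg : MonotoneOn (fun x => L * x - f x) (Icc a b)) :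
    upperDeriv a b f = fun s => ⨅ n : ℕ, ⨆ q : ℚ,
      ⨆ (_ : (q : ℝ) ∈ Metric.ball s (1 / (n + 1)) ∩ (Icc a b \ {s})), (slope f s q : EReal) := by
  funext s
  have hbasis : upperDeriv a b f s = ⨅ n : ℕ,
      ⨆ t ∈ Metric.ball s (1 / (n + 1)) ∩ (Icc a b \ {s}), (slope f s t : EReal) := by
    rw [upperDeriv_eq_limsup_slope,
      (nhdsWithin_hasBasis Metric.nhds_basis_ball_inv_nat_succ _).limsup_eq_iInf_iSup]
    simp only [iInf_true]
  refine le_antisymm ?_ ?_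
  · by_cases hs : s ∈ Icc a b
    · rw [hbasis]
      refine iInf_mono fun n => iSup₂_le fun t ht => EReal.ge_of_forall_gt_iff_ge.1 fun z hz => ?_
      obtain ⟨q, hq, hzq⟩ := exists_rat_mem_lt_slope hg hs ht.2.1 ht.2.2
        (EReal.coe_lt_coe_iff.1 hz) (Metric.isOpen_ball.mem_nhds ht.1)
      exact (EReal.coe_le_coe_iff.2 hzq.le).trans (le_iSup₂_of_le q hq le_rfl)
    · rw [upperDeriv_of_notMem hs]
      exact bot_le
  · rw [hbasis]
    exact iInf_mono fun n => iSup₂_le fun q hq => le_iSup₂_of_le (q : ℝ) hq le_rfl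

theorem measurable_upperDeriv (hf : Measurable f)
    (hg : MonotoneOn (fun x => L * x - f x) (Icc a b)) : Measurable (upperDeriv a b f) := by
  classical
  rw [upperDeriv_eq_iInf_iSup_rat hg]
  refine Measurable.iInf fun n => Measurable.iSup fun q => ?_
  simp_rw [iSup_eq_if]
  refine Measurable.ite ?_ (measurable_coe_real_ereal.comp ?_) measurable_const
  · simp only [Metric.mem_ball, mem_inter_iff, Set.mem_sdiff, ofPred_and]
    exact (measurableSet_lt (by fun_prop) measurable_const).inter
      ((MeasurableSet.const _).inter (measurableSet_eq_fun measurable_const measurable_id).compl)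
  · simp_rw [slope_def_field]
    fun_prop

theorem measurable_upperDeriv_of_monotoneOn (hab : a ≤ b)
    (hg : MonotoneOn (fun x => L * x - f x) (Icc a b)) : Measurable (upperDeriv a b f) := by
  set G := IccExtend hab fun x : Icc a b => L * x - f x
  have hG : Monotone G := (monotoneOn_iff_monotone.1 hg).IccExtend hab
  have hfG : EqOn f (fun x => L * x - G x) (Icc a b) := fun x hx => by
    simp only [G, IccExtend_of_mem hab _ hx, sub_sub_cancel]
  rw [upperDeriv_congr hfG]
  refine measurable_upperDeriv (L := L) ((measurable_const.mul measurable_id).sub hG.measurable) ?_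
  simpa only [sub_sub_cancel] using hG.monotoneOn _

theorem upperDeriv_eq_of_hasDerivAt {d : ℝ} (hs : s ∈ Ioo a b) (hf : HasDerivAt f d s) :
    upperDeriv a b f s = d := by
  have hnhds : 𝓝[Icc a b \ {s}] s = 𝓝[≠] s := by
    rw [sdiff_eq, nhdsWithin_inter_of_mem (mem_nhdsWithin_of_mem_nhds (Icc_mem_nhds hs.1 hs.2))]
  rw [upperDeriv_eq_limsup_slope, hnhds]
  exact ((continuous_coe_real_ereal.tendsto d).comp (hasDerivAt_iff_tendsto_slope.1 hf)).limsup_eq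

theorem erealToENNReal_eq : erealToENNReal = EReal.toENNReal := rfl

theorem lintegral_sub_upperDeriv_le (hab : a ≤ b)
    (hg : MonotoneOn (fun t => L * t - f t) (Icc a b)) :
    ∫⁻ s in Icc a b, erealToENNReal (L - upperDeriv a b f s) ≤
      ENNReal.ofReal (L * (b - a) - (f b - f a)) := by
  set g := fun t => L * t - f t
  set D := Ioo a b ∩ {x | DifferentiableAt ℝ g x}
  have hD : MeasurableSet D := measurableSet_Ioo.inter (measurableSet_of_differentiableAt ℝ g)
  have hDIcc : D =ᵐ[volume] Icc a b := by
    refine (eventuallyEq_set.2 ?_).trans Ioo_ae_eq_Icc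
    filter_upwards [hg.ae_differentiableWithinAt_of_mem] with x hx
    exact ⟨fun h => h.1, fun h => ⟨h, (hx (Ioo_subset_Icc_self h)).differentiableAt
      (Icc_mem_nhds h.1 h.2)⟩⟩
  have hderiv : ∀ x ∈ D, erealToENNReal (L - upperDeriv a b f x) = ENNReal.ofReal (deriv g x) := by
    intro x hx
    have hf : HasDerivAt f (L - deriv g x) x := by
      simpa [g, Pi.sub_def] using ((hasDerivAt_id x).const_mul L).sub hx.2.hasDerivAt
    rw [upperDeriv_eq_of_hasDerivAt hx.1 hf, ← EReal.coe_sub, sub_sub_cancel, erealToENNReal_eq,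
      EReal.toENNReal_of_ne_top (EReal.coe_ne_top _), EReal.toReal_coe]
  have hgD : g '' D ⊆ Icc (g a) (g b) := by
    rintro _ ⟨x, hx, rfl⟩
    have hx' := Ioo_subset_Icc_self hx.1
    exact ⟨hg ⟨le_rfl, hab⟩ hx' hx'.1, hg hx' ⟨hab, le_rfl⟩ hx'.2⟩
  calc ∫⁻ s in Icc a b, erealToENNReal (L - upperDeriv a b f s)
      = ∫⁻ s in D, ENNReal.ofReal (deriv g s) := by
        rw [Measure.restrict_congr_set hDIcc.symm]
        exact setLIntegral_congr_fun hD hderiv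
    _ = volume (g '' D) := lintegral_deriv_eq_volume_image_of_monotoneOn hD
        (fun x hx => hx.2.hasDerivAt.hasDerivWithinAt)
        (hg.mono (inter_subset_left.trans Ioo_subset_Icc_self))
    _ ≤ volume (Icc (g a) (g b)) := measure_mono hgD
    _ = ENNReal.ofReal (L * (b - a) - (f b - f a)) := by
        rw [Real.volume_Icc]
        congr 1
        ring

theorem EReal.coe_le_coe_sub_of_le_ofReal {x y : ℝ} {I : ENNReal}
    (hI : I ≤ ENNReal.ofReal (y - x)) (hxy : x ≤ y) : (x : EReal) ≤ y - I := by
  have hI' : (I : EReal) ≤ ((y - x : ℝ) : EReal) := by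
    rw [← max_eq_left (_root_.sub_nonneg.2 hxy), ← EReal.coe_ennreal_ofReal]
    exact EReal.coe_ennreal_le_coe_ennreal_iff.2 hI
  calc (x : EReal) = y - ((y - x : ℝ) : EReal) := by rw [← EReal.coe_sub, sub_sub_cancel]
    _ ≤ y - I := EReal.sub_le_sub le_rfl hI'

/-- Lemma A.2 (Lahiri): if the upper derivative of `f` is bounded above by `L`
on `[a,b]`, then it is integrable (its well-defined integral being
`L (b-a)` minus the `ℝ≥0∞`-valued integral of the nonnegative difference) and
`f b - f a ≤ ∫_a^b (upper derivative of f at s) ds`. -/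
theorem growth_bound_by_integral_of_upper_derivative
    (a b L : ℝ) (hab : a < b) (f : ℝ → ℝ)
    (hL : ∀ s ∈ Set.Icc a b, upperDeriv a b f s ≤ (L : EReal)) :
    Measurable (fun s => erealToENNReal ((L : EReal) - upperDeriv a b f s)) ∧
    ((f b - f a : ℝ) : EReal) ≤
      ((L * (b - a) : ℝ) : EReal) -
        ((∫⁻ s in Set.Icc a b,
            erealToENNReal ((L : EReal) - upperDeriv a b f s)) : ENNReal) := by
  have hg := monotoneOn_mul_sub_of_upperDeriv_le hL
  refine ⟨?_, ?_⟩
  · rw [erealToENNReal_eq]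
    exact ((measurable_upperDeriv_of_monotoneOn hab.le hg).const_sub _).ereal_toENNReal
  · have hgab := hg ⟨le_rfl, hab.le⟩ ⟨hab.le, le_rfl⟩ hab.le
    exact EReal.coe_le_coe_sub_of_le_ofReal (lintegral_sub_upperDeriv_le hab.le hg)
      (by simp only at hgab; linarith)
end

section
/- If f : [a,b] → ℝ satisfies limsup_{t→s}(f(t)-f(s))/(t-s) ≤ L for all s ∈ [a,b] with L ∈ ℝ, then f is measurable; in fact t ↦ f(t) - Lt is monotonically non-increasing on [a,b]. -/
open Filter Set

lemma local_bound (a b L ε s : ℝ) (hε : 0 < ε) (f : ℝ → ℝ)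
    (h : Filter.limsup (fun t => ((f t - f s) / (t - s) : EReal))
        (nhdsWithin s (Set.Icc a b \ {s})) ≤ (L : EReal)) :
    ∃ δ > 0, ∀ t ∈ Set.Icc a b \ {s}, dist t s < δ → (f t - f s) / (t - s) < L + ε := by
  have h2 : Filter.limsup (fun t => ((f t - f s) / (t - s) : EReal))
        (nhdsWithin s (Set.Icc a b \ {s})) < ((L + ε : ℝ) : EReal) := by
    refine h.trans_lt ?_
    exact_mod_cast (lt_add_of_pos_right L hε)
  have h3 := Filter.eventually_lt_of_limsup_lt h2
  rw [eventually_nhdsWithin_iff, Metric.eventually_nhds_iff] at h3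
  obtain ⟨δ, hδ, hd⟩ := h3
  refine ⟨δ, hδ, fun t ht hdt => ?_⟩
  have h4 := hd hdt ht
  have h5 : (((f t - f s) / (t - s) : ℝ) : EReal) < ((L + ε : ℝ) : EReal) := by
    rw [EReal.coe_div, EReal.coe_sub, EReal.coe_sub]; exact h4
  exact_mod_cast h5

lemma key_step (a b L ε : ℝ) (f : ℝ → ℝ)
    (hloc : ∀ s ∈ Set.Icc a b, ∃ δ > 0, ∀ t ∈ Set.Icc a b \ {s}, dist t s < δ →
      (f t - f s) / (t - s) < L + ε)
    {x y : ℝ} (hx : x ∈ Set.Icc a b) (hy : y ∈ Set.Icc a b) (hxy : x ≤ y) :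
    f y - f x ≤ (L + ε) * (y - x) := by
  set e := L + ε with he
  set S : Set ℝ := {t | t ∈ Set.Icc x y ∧ f t - f x ≤ e * (t - x)} with hS
  have hxS : x ∈ S := ⟨⟨le_refl x, hxy⟩, by simp⟩
  have hne : S.Nonempty := ⟨x, hxS⟩
  have hbdd : BddAbove S := ⟨y, fun t ht => ht.1.2⟩
  set c := sSup S with hc
  have hxc : x ≤ c := le_csSup hbdd hxS
  have hcy : c ≤ y := csSup_le hne fun t ht => ht.1.2
  have hcab : c ∈ Set.Icc a b := ⟨hx.1.trans hxc, hcy.trans hy.2⟩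
  -- c ∈ S
  have hcS : c ∈ S := by
    obtain ⟨δ, hδ, hd⟩ := hloc c hcab
    obtain ⟨t, htS, htc⟩ : ∃ t ∈ S, c - δ < t := by
      obtain ⟨t, htS, htc⟩ := exists_lt_of_lt_csSup hne (show c - δ < c by linarith)
      exact ⟨t, htS, htc⟩
    have htc' : t ≤ c := le_csSup hbdd htS
    rcases eq_or_lt_of_le htc' with rfl | hlt
    · exact htS
    · have htab : t ∈ Set.Icc a b := ⟨hx.1.trans htS.1.1, htS.1.2.trans hy.2⟩
      have h1 := hd t ⟨htab, by simp [ne_of_lt hlt]⟩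
        (by rw [Real.dist_eq, abs_of_neg (by linarith : t - c < 0)]; linarith)
      rw [div_lt_iff_of_neg (by linarith : t - c < 0)] at h1
      have h2 := htS.2
      have hid : e * (c - x) = e * (t - x) - e * (t - c) := by ring
      exact ⟨⟨hxc, hcy⟩, by linarith⟩
  -- c = y
  rcases eq_or_lt_of_le hcy with heq | hlt
  · rw [heq] at hcS
    exact hcS.2
  · exfalso
    obtain ⟨δ, hδ, hd⟩ := hloc c hcab
    set t := min (c + δ / 2) y with ht
    have hct : c < t := lt_min (by linarith) hlt
    have hty : t ≤ y := min_le_right _ _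
    have htab : t ∈ Set.Icc a b := ⟨hx.1.trans (hxc.trans hct.le), hty.trans hy.2⟩
    have h1 := hd t ⟨htab, by simp [ne_of_gt hct]⟩
      (by rw [Real.dist_eq, abs_of_pos (by linarith : (0:ℝ) < t - c)]
          have : t ≤ c + δ / 2 := min_le_left _ _
          linarith)
    rw [div_lt_iff₀ (by linarith : (0:ℝ) < t - c)] at h1
    have h2 := hcS.2
    have hid : e * (t - x) = e * (c - x) + e * (t - c) := by ring
    have htS : t ∈ S := ⟨⟨hxc.trans hct.le, hty⟩, by linarith⟩
    exact absurd (le_csSup hbdd htS) (not_le.mpr hct)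


/-- If the upper derivative of `f` on `[a,b]` is everywhere at most `L`, then
`t ↦ f t - L t` is monotonically non-increasing on `[a,b]`; in particular `f`
(restricted to `[a,b]`) is measurable. -/
theorem antitoneOn_and_measurable_of_upper_derivative_le
    (a b L : ℝ) (hab : a < b) (f : ℝ → ℝ)
    (hL : ∀ s ∈ Set.Icc a b,
      Filter.limsup (fun t => ((f t - f s) / (t - s) : EReal))
        (nhdsWithin s (Set.Icc a b \ {s})) ≤ (L : EReal)) :
    AntitoneOn (fun t => f t - L * t) (Set.Icc a b) ∧
    Measurable (fun t : Set.Icc a b => f t) := by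
  have key : ∀ x ∈ Set.Icc a b, ∀ y ∈ Set.Icc a b, x ≤ y → f y - f x ≤ L * (y - x) := by
    intro x hx y hy hxy
    rcases eq_or_lt_of_le hxy with rfl | hlt
    · simp
    refine le_of_forall_pos_le_add fun ε' hε' => ?_
    have hε : 0 < ε' / (y - x) := div_pos hε' (by linarith)
    have := key_step a b L (ε' / (y - x)) f
      (fun s hs => local_bound a b L (ε' / (y - x)) s hε f (hL s hs)) hx hy hxy
    have hne : y - x ≠ 0 := by linarith
    calc f y - f x ≤ (L + ε' / (y - x)) * (y - x) := this
      _ = L * (y - x) + ε' := by field_simp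
  have hanti : AntitoneOn (fun t => f t - L * t) (Set.Icc a b) := by
    intro x hx y hy hxy
    have := key x hx y hy hxy
    simp only
    linarith [this, (by ring : L * (y - x) = L * y - L * x)]
  refine ⟨hanti, ?_⟩
  -- measurability via antitone extension
  set p : ℝ → ℝ := fun t => max a (min t b) with hp
  have hpmem : ∀ t, p t ∈ Set.Icc a b := fun t =>
    ⟨le_max_left _ _, max_le (hab.le) (min_le_right _ _)⟩
  have hpmono : Monotone p := fun s t hst =>
    max_le_max le_rfl (min_le_min_right _ hst)
  set G : ℝ → ℝ := fun t => f (p t) - L * p t with hG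
  have hGanti : Antitone G := fun s t hst => hanti (hpmem s) (hpmem t) (hpmono hst)
  have hGmeas : Measurable G := hGanti.measurable
  have heq : (fun t : Set.Icc a b => f t) =
      fun t : Set.Icc a b => G (t : ℝ) + L * (t : ℝ) := by
    funext t
    have hpt : p (t : ℝ) = (t : ℝ) := by
      rw [hp]
      simp only
      rw [min_eq_left t.2.2, max_eq_right t.2.1]
    simp only [hG, hpt]
    ring
  rw [heq]
  exact (hGmeas.comp measurable_subtype_coe).add (measurable_const.mul measurable_subtype_coe)
end
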